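/- arXiv:1302.3085 — 5 statements merged into one kernel-verified Lean document; each statement's English description precedes it below -/
import Mathlib

section
/- KKT characterization of weighted proportional fairness: a feasible scheduling vector φ (with φ_{i,z} ≥ 0 and ∑_i φ_{i,z} = 1 for each z, and r_i(φ) > 0 for all i) maximizes ∑_i w_i log r_i(φ) if and only if for every resource block z and every client j with φ_{j,z} > 0, the quantity w_j H_{j,z} / r_j(φ) equals max_k w_k H_{k,z} / r_k(φ). -/
/-- KKT characterization of weighted proportional fairness: a
feasible scheduling vector `φ` with positive throughputs maximizes
`∑ i, w i * log (r i φ)` over feasible vectors with positive throughputs iff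
for every block `z` and every client `j` with `φ j z > 0`, the quantity
`w j * H j z / r j φ` equals `max_k (w k * H k z / r k φ)` (equivalently, it
dominates the quantity for every client `k`). -/
theorem stmt2 {I Z : Type*} [Fintype I] [Fintype Z]
    (w : I → ℝ) (H : I → Z → ℝ)
    (hw : ∀ i, 0 < w i) (hH : ∀ i z, 0 ≤ H i z)
    (r : (I → Z → ℝ) → I → ℝ)
    (hr : ∀ φ i, r φ i = ∑ z, φ i z * H i z)
    (φ : I → Z → ℝ)
    (hφ0 : ∀ i z, 0 ≤ φ i z) (hφ1 : ∀ z, ∑ i, φ i z = 1)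
    (hφr : ∀ i, 0 < r φ i) :
    ((∀ ψ : I → Z → ℝ, (∀ i z, 0 ≤ ψ i z) → (∀ z, ∑ i, ψ i z = 1) →
        (∀ i, 0 < r ψ i) →
        ∑ i, w i * Real.log (r ψ i) ≤ ∑ i, w i * Real.log (r φ i))
      ↔
      (∀ z j, 0 < φ j z →
        ∀ k, w k * H k z / r φ k ≤ w j * H j z / r φ j)) := by
  classical
  constructor
  · -- optimality implies the KKT condition, by a perturbation argument
    intro hopt z j hj k
    by_contra hcon
    push_neg at hcon
    have hjk : j ≠ k := by rintro rfl; exact lt_irrefl _ hcon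
    have haj : 0 ≤ w j * H j z / r φ j :=
      div_nonneg (mul_nonneg (hw j).le (hH j z)) (hφr j).le
    have hHk : 0 < H k z := by
      by_contra h
      push_neg at h
      have : H k z = 0 := le_antisymm h (hH k z)
      rw [this] at hcon
      simp at hcon
      linarith
    -- step size bound
    set δ : ℝ := min (φ j z) (r φ j / (H j z + 1)) with hδdef
    have hδ : 0 < δ :=
      lt_min hj (div_pos (hφr j) (by linarith [hH j z]))
    -- the one-dimensional perturbed objective
    set g : ℝ → ℝ := fun t =>
      w j * Real.log (r φ j - t * H j z) + w k * Real.log (r φ k + t * H k z)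
      with hg
    set c : ℝ := w k * H k z / r φ k - w j * H j z / r φ j with hc
    have hcpos : 0 < c := by rw [hc]; linarith
    have hderiv : HasDerivAt g c 0 := by
      have h1 : HasDerivAt (fun t : ℝ => r φ j - t * H j z) (-(1 * H j z)) 0 :=
        ((hasDerivAt_id (0:ℝ)).mul_const (H j z)).const_sub (r φ j)
      have h2 : HasDerivAt (fun t : ℝ => r φ k + t * H k z) (1 * H k z) 0 :=
        ((hasDerivAt_id (0:ℝ)).mul_const (H k z)).const_add (r φ k)
      have hne1 : r φ j - (0:ℝ) * H j z ≠ 0 := by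
        simp; exact (hφr j).ne'
      have hne2 : r φ k + (0:ℝ) * H k z ≠ 0 := by
        simp; exact (hφr k).ne'
      have := ((h1.log hne1).const_mul (w j)).add ((h2.log hne2).const_mul (w k))
      refine this.congr_deriv ?_
      rw [hc]
      field_simp [(hφr j).ne', (hφr k).ne']
      ring
    have hslope : Filter.Tendsto (slope g 0) (nhdsWithin 0 {(0:ℝ)}ᶜ) (nhds c) :=
      hasDerivAt_iff_tendsto_slope.mp hderiv
    have hev1 : ∀ᶠ t in nhdsWithin (0:ℝ) (Set.Ioi 0), 0 < slope g 0 t := by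
      have h := hslope.eventually (eventually_gt_nhds hcpos)
      exact h.filter_mono (nhdsWithin_mono 0 (fun x hx => ne_of_gt hx))
    have hev2 : ∀ᶠ t in nhdsWithin (0:ℝ) (Set.Ioi 0), t ∈ Set.Ioo (0:ℝ) δ :=
      Ioo_mem_nhdsGT_of_mem ⟨le_refl 0, hδ⟩
    obtain ⟨t, hslopet, ht0, htδ⟩ :
        ∃ t, 0 < slope g 0 t ∧ 0 < t ∧ t < δ := by
      have := (hev1.and hev2).exists
      obtain ⟨t, h1, h2⟩ := this
      exact ⟨t, h1, h2.1, h2.2⟩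
    have ht1 : t < φ j z := lt_of_lt_of_le htδ (min_le_left _ _)
    have ht2 : t * H j z < r φ j := by
      have h := lt_of_lt_of_le htδ (min_le_right _ _)
      have := (lt_div_iff₀ (by linarith [hH j z] : (0:ℝ) < H j z + 1)).mp h
      nlinarith [hH j z]
    -- the perturbation coefficient
    set d : I → ℝ := fun i => if i = j then -t else if i = k then t else 0 with hd
    set ψ : I → Z → ℝ := fun i z' => φ i z' + (if z' = z then d i else 0) with hψ
    have hrψ : ∀ i, r ψ i = r φ i + d i * H i z := by
      intro i
      rw [hr ψ i, hr φ i]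
      simp only [hψ, add_mul]
      rw [Finset.sum_add_distrib]
      congr 1
      calc ∑ z', (if z' = z then d i else 0) * H i z'
          = ∑ z', (if z' = z then d i * H i z' else 0) :=
            Finset.sum_congr rfl (fun z' _ => by split <;> simp)
        _ = d i * H i z := by rw [Finset.sum_ite_eq' Finset.univ z]; simp
    have hψ0' : ∀ i z', 0 ≤ ψ i z' := by
      intro i z'
      simp only [hψ, hd]
      by_cases hz : z' = z
      · rw [hz]
        by_cases h1 : i = j
        · simp [h1, hjk]; linarith
        · by_cases h2 : i = k
          · simp [h1, h2, Ne.symm hjk]; linarith [hφ0 k z, ht0]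
          · simp [h1, h2]; exact hφ0 i z
      · simp [hz]; exact hφ0 i z'
    have hψ1' : ∀ z', ∑ i, ψ i z' = 1 := by
      intro z'
      by_cases hz : z' = z
      · rw [hz]
        have hsplit : ∀ i, d i = (if i = j then -t else 0) + (if i = k then t else 0) := by
          intro i
          simp only [hd]
          by_cases h1 : i = j
          · rw [h1]; simp [hjk]
          · simp [h1]
        have hd0 : (∑ i, d i) = 0 := by
          have hcg : (∑ i, d i) = ∑ i, ((if i = j then -t else 0) + (if i = k then t else 0)) :=
            Finset.sum_congr rfl fun i _ => hsplit i
          rw [hcg, Finset.sum_add_distrib,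
            Finset.sum_ite_eq' Finset.univ j, Finset.sum_ite_eq' Finset.univ k]
          simp
        simp only [hψ, if_pos rfl]
        rw [Finset.sum_add_distrib, hφ1 z]
        simp [hd0]
      · simp only [hψ, if_neg hz]
        simp [hφ1 z']
    have hψr' : ∀ i, 0 < r ψ i := by
      intro i
      rw [hrψ i]
      simp only [hd]
      by_cases h1 : i = j
      · simp [h1, hjk]; nlinarith [ht2]
      · by_cases h2 : i = k
        · simp [h1, h2, Ne.symm hjk]
          nlinarith [hφr k, ht0.le, hHk.le]
        · simp [h1, h2]; exact hφr i
    have hle := hopt ψ hψ0' hψ1' hψr'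
    have hdiff : (∑ i, w i * Real.log (r ψ i)) - ∑ i, w i * Real.log (r φ i)
        = g t - g 0 := by
      rw [← Finset.sum_sub_distrib]
      have hzero : ∀ i ∈ Finset.univ, i ∉ ({j, k} : Finset I) →
          w i * Real.log (r ψ i) - w i * Real.log (r φ i) = 0 := by
        intro i _ hi
        simp only [Finset.mem_insert, Finset.mem_singleton, not_or] at hi
        have : r ψ i = r φ i := by
          rw [hrψ i]; simp [hd, hi.1, hi.2]
        rw [this, sub_self]
      rw [← Finset.sum_subset (Finset.subset_univ ({j, k} : Finset I)) hzero,
        Finset.sum_pair hjk]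
      have e1 : r ψ j = r φ j - t * H j z := by
        rw [hrψ j]; simp [hd]; ring
      have e2 : r ψ k = r φ k + t * H k z := by
        rw [hrψ k]; simp [hd, Ne.symm hjk]
      rw [e1, e2]
      simp only [hg]
      simp
      ring
    have hgt : 0 < g t - g 0 := by
      have h' : 0 < (g t - g 0) / t := by
        have : slope g 0 t = (g t - g 0) / (t - 0) := by
          simp [slope_def_field]
        rw [this, sub_zero] at hslopet
        exact hslopet
      rcases div_pos_iff.mp h' with ⟨h1, _⟩ | ⟨_, h2⟩
      · exact h1
      · linarith
    linarith [hle, hdiff, hgt]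
  · -- KKT condition implies optimality (concavity / first-order bound)
    intro hkkt ψ hψ0 hψ1 hψr
    set a : I → Z → ℝ := fun i z => w i * H i z / r φ i with ha
    -- per-block inequality
    have hblock : ∀ z, ∑ i, (ψ i z - φ i z) * a i z ≤ 0 := by
      intro z
      obtain ⟨j, -, hj⟩ : ∃ j ∈ Finset.univ, φ j z ≠ 0 := by
        apply Finset.exists_ne_zero_of_sum_ne_zero
        rw [hφ1 z]; norm_num
      have hj' : 0 < φ j z := (hφ0 j z).lt_of_ne (Ne.symm hj)
      have h1 : ∑ i, ψ i z * a i z ≤ a j z := by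
        calc ∑ i, ψ i z * a i z ≤ ∑ i, ψ i z * a j z := by
              apply Finset.sum_le_sum
              intro i _
              exact mul_le_mul_of_nonneg_left (hkkt z j hj' i) (hψ0 i z)
          _ = a j z := by rw [← Finset.sum_mul, hψ1 z, one_mul]
      have h2 : ∑ i, φ i z * a i z = a j z := by
        have : ∀ i ∈ Finset.univ, φ i z * a i z = φ i z * a j z := by
          intro i _
          rcases eq_or_lt_of_le (hφ0 i z) with h | h
          · rw [← h, zero_mul, zero_mul]
          · have key : a i z = a j z := le_antisymm (hkkt z j hj' i) (hkkt z i h j)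
            rw [key]
        rw [Finset.sum_congr rfl this, ← Finset.sum_mul, hφ1 z, one_mul]
      have : ∑ i, (ψ i z - φ i z) * a i z
          = (∑ i, ψ i z * a i z) - ∑ i, φ i z * a i z := by
        rw [← Finset.sum_sub_distrib]; congr 1; ext i; ring
      rw [this, h2]; linarith
    -- pointwise log bound
    have hlog : ∀ i, w i * Real.log (r ψ i) - w i * Real.log (r φ i)
        ≤ w i / r φ i * (r ψ i - r φ i) := by
      intro i
      have h1 : Real.log (r ψ i) - Real.log (r φ i) ≤ r ψ i / r φ i - 1 := by
        rw [← Real.log_div (hψr i).ne' (hφr i).ne']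
        exact Real.log_le_sub_one_of_pos (div_pos (hψr i) (hφr i))
      have h2 : w i * (Real.log (r ψ i) - Real.log (r φ i))
          ≤ w i * (r ψ i / r φ i - 1) :=
        mul_le_mul_of_nonneg_left h1 (hw i).le
      have hne : r φ i ≠ 0 := (hφr i).ne'
      have h3 : w i * (r ψ i / r φ i - 1) = w i / r φ i * (r ψ i - r φ i) := by
        field_simp
      linarith [h2, h3.le]
    have hkey : ∑ i, w i / r φ i * (r ψ i - r φ i)
        = ∑ z, ∑ i, (ψ i z - φ i z) * a i z := by
      rw [Finset.sum_comm]
      apply Finset.sum_congr rfl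
      intro i _
      simp only [ha]
      rw [hr ψ i, hr φ i, ← Finset.sum_sub_distrib, Finset.mul_sum]
      apply Finset.sum_congr rfl
      intro z _
      ring
    have hsum : ∑ i, (w i * Real.log (r ψ i) - w i * Real.log (r φ i)) ≤ 0 := by
      calc ∑ i, (w i * Real.log (r ψ i) - w i * Real.log (r φ i))
          ≤ ∑ i, w i / r φ i * (r ψ i - r φ i) :=
            Finset.sum_le_sum fun i _ => hlog i
        _ = ∑ z, ∑ i, (ψ i z - φ i z) * a i z := hkey
        _ ≤ 0 := Finset.sum_nonpos fun z _ => hblock z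
      
    rw [Finset.sum_sub_distrib] at hsum
    linarith
end

section
/- Correctness of the Approximate Estimator (Theorem 2, two-block version): consider two 'clients' — client i with weight w_i and rates H_z on blocks z, and an aggregate client with weight W and rates \bar H_z — with blocks sorted so that \bar H_1/H_1 ≤ \bar H_2/H_2 ≤ …; if z_0 is a block with optimal fractional share 0 < φ_{i,z_0} < 1 satisfying w_i H_{z_0}/(r*_i + φ_{i,z_0} H_{z_0}) = W \bar H_{z_0}/(\bar r* − φ_{i,z_0} \bar H_{z_0}), and φ_{i,z} = 1 for z < z_0, φ_{i,z} = 0 for z > z_0, then this φ together with the complementary allocation to the aggregate client satisfies the KKT conditions and hence maximizes w_i log r_i + W log \bar r over feasible schedules. -/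
set_option maxHeartbeats 800000


/-- Correctness of the Approximate Estimator (Theorem 2,
two-block version). Blocks are sorted so `Hb z / H z` is nondecreasing. If
`φ` gives client `i` full share on blocks before `z0`, zero share after `z0`,
and a fractional share `0 < φ z0 < 1` satisfying the balance equation
`w * H z0 / (r* + φ z0 * H z0) = W * Hb z0 / (rb* - φ z0 * Hb z0)`, then `φ`
(with the complementary allocation to the aggregate client) maximizes
`w * log r_i + W * log rb` over all feasible schedules (with positive
throughputs). -/
theorem stmt5 {n : ℕ} (H Hb : Fin n → ℝ) (w W : ℝ)
    (hH : ∀ z, 0 < H z) (hHb : ∀ z, 0 < Hb z) (hw : 0 < w) (hW : 0 < W)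
    (hsorted : ∀ z z' : Fin n, z ≤ z' → Hb z / H z ≤ Hb z' / H z')
    (z0 : Fin n) (φ : Fin n → ℝ)
    (hlt : ∀ z, z < z0 → φ z = 1) (hgt : ∀ z, z0 < z → φ z = 0)
    (hfrac : 0 < φ z0 ∧ φ z0 < 1)
    (rstar rbstar : ℝ)
    (hrstar : rstar = ∑ z ∈ Finset.univ.filter (fun z => z < z0), H z)
    (hrbstar : rbstar = ∑ z ∈ Finset.univ.filter (fun z => z0 ≤ z), Hb z)
    (hbal : w * H z0 / (rstar + φ z0 * H z0)
          = W * Hb z0 / (rbstar - φ z0 * Hb z0)) :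
    ∀ ψ : Fin n → ℝ, (∀ z, 0 ≤ ψ z ∧ ψ z ≤ 1) →
      0 < ∑ z, ψ z * H z → 0 < ∑ z, (1 - ψ z) * Hb z →
      w * Real.log (∑ z, ψ z * H z) + W * Real.log (∑ z, (1 - ψ z) * Hb z) ≤
        w * Real.log (∑ z, φ z * H z) + W * Real.log (∑ z, (1 - φ z) * Hb z) := by
  obtain ⟨hφ0, hφ1⟩ := hfrac
  intro ψ hψ hSψ hTψ
  set Sψ := ∑ z, ψ z * H z with hSψdef
  set Tψ := ∑ z, (1 - ψ z) * Hb z with hTψdef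
  set r := ∑ z, φ z * H z with hrdef
  set rb := ∑ z, (1 - φ z) * Hb z with hrbdef
  -- identify r and rb
  have hr_eq : r = rstar + φ z0 * H z0 := by
    have : ∀ z : Fin n, φ z * H z =
        (if z < z0 then H z else 0) + (if z = z0 then φ z0 * H z0 else 0) := by
      intro z
      rcases lt_trichotomy z z0 with h | h | h
      · simp [h, hlt z h, h.ne]
      · simp [h]
      · simp [hgt z h, not_lt.mpr h.le, h.ne']
    rw [hrdef, Finset.sum_congr rfl fun z _ => this z, Finset.sum_add_distrib,
      hrstar, Finset.sum_filter]
    simp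
  have hrb_eq : rb = rbstar - φ z0 * Hb z0 := by
    have : ∀ z : Fin n, (1 - φ z) * Hb z =
        (if z0 ≤ z then Hb z else 0) - (if z = z0 then φ z0 * Hb z0 else 0) := by
      intro z
      rcases lt_trichotomy z z0 with h | h | h
      · simp [hlt z h, not_le.mpr h, h.ne]
      · simp [h]; ring
      · simp [hgt z h, h.le, h.ne']
    rw [hrbdef, Finset.sum_congr rfl fun z _ => this z, Finset.sum_sub_distrib,
      hrbstar, Finset.sum_filter]
    simp
  have hrstar_nonneg : 0 ≤ rstar := by
    rw [hrstar]; exact Finset.sum_nonneg fun z _ => (hH z).le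
  have hr_pos : 0 < r := by
    rw [hr_eq]
    have := mul_pos hφ0 (hH z0)
    linarith
  have hrb_pos : 0 < rb := by
    rw [hrb_eq, hrbstar]
    have hmem : z0 ∈ Finset.univ.filter (fun z => z0 ≤ z) := by simp
    have hle : Hb z0 ≤ ∑ z ∈ Finset.univ.filter (fun z => z0 ≤ z), Hb z :=
      Finset.single_le_sum (f := Hb) (fun z _ => (hHb z).le) hmem
    nlinarith [hHb z0]
  -- the multiplier
  set A := w / r with hAdef
  set B := W / rb with hBdef
  have hA : 0 < A := div_pos hw hr_pos
  have hB : 0 < B := div_pos hW hrb_pos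
  have hkey : A * H z0 = B * Hb z0 := by
    rw [hAdef, hBdef]
    rw [hr_eq, hrb_eq] at *
    field_simp at hbal ⊢
    linarith [hbal]
  -- per-block inequality
  have hterm : ∀ z : Fin n, (ψ z - φ z) * (A * H z - B * Hb z) ≤ 0 := by
    intro z
    rcases lt_trichotomy z z0 with h | h | h
    · have h1 : Hb z / H z ≤ Hb z0 / H z0 := hsorted z z0 h.le
      have h2 : Hb z * H z0 ≤ Hb z0 * H z :=
        (div_le_div_iff₀ (hH z) (hH z0)).mp h1
      have hk2 : A * H z0 * H z = B * Hb z0 * H z := by rw [hkey]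
      have h3 : B * Hb z ≤ A * H z := by
        refine le_of_mul_le_mul_right ?_ (hH z0)
        have := mul_le_mul_of_nonneg_left h2 hB.le
        nlinarith [this, hk2]
      have := (hψ z).2
      rw [hlt z h]
      exact mul_nonpos_iff.mpr (Or.inr ⟨by linarith, by linarith⟩)
    · subst h
      have hz : A * H z - B * Hb z = 0 := by linarith [hkey]
      rw [hz, mul_zero]
    · have h1 : Hb z0 / H z0 ≤ Hb z / H z := hsorted z0 z h.le
      have h2 : Hb z0 * H z ≤ Hb z * H z0 :=
        (div_le_div_iff₀ (hH z0) (hH z)).mp h1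
      have hk2 : A * H z0 * H z = B * Hb z0 * H z := by rw [hkey]
      have h3 : A * H z ≤ B * Hb z := by
        refine le_of_mul_le_mul_right ?_ (hH z0)
        have := mul_le_mul_of_nonneg_left h2 hB.le
        nlinarith [this, hk2]
      have := (hψ z).1
      rw [hgt z h]
      exact mul_nonpos_iff.mpr (Or.inl ⟨by linarith, by linarith⟩)
  have hsum : ∑ z, (ψ z - φ z) * (A * H z - B * Hb z) ≤ 0 :=
    Finset.sum_nonpos fun z _ => hterm z
  have hexp : ∑ z, (ψ z - φ z) * (A * H z - B * Hb z)
      = A * (Sψ - r) + B * (Tψ - rb) := by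
    rw [hSψdef, hTψdef, hrdef, hrbdef, ← Finset.sum_sub_distrib,
      ← Finset.sum_sub_distrib, Finset.mul_sum, Finset.mul_sum,
      ← Finset.sum_add_distrib]
    exact Finset.sum_congr rfl fun z _ => by ring
  -- log bounds
  have l1 : Real.log Sψ - Real.log r ≤ Sψ / r - 1 := by
    rw [← Real.log_div hSψ.ne' hr_pos.ne']
    exact Real.log_le_sub_one_of_pos (div_pos hSψ hr_pos)
  have l2 : Real.log Tψ - Real.log rb ≤ Tψ / rb - 1 := by
    rw [← Real.log_div hTψ.ne' hrb_pos.ne']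
    exact Real.log_le_sub_one_of_pos (div_pos hTψ hrb_pos)
  have e1 : w * (Sψ / r - 1) = A * (Sψ - r) := by
    rw [hAdef]; field_simp
  have e2 : W * (Tψ / rb - 1) = B * (Tψ - rb) := by
    rw [hBdef]; field_simp
  have m1 := mul_le_mul_of_nonneg_left l1 hw.le
  have m2 := mul_le_mul_of_nonneg_left l2 hW.le
  have hfin : A * (Sψ - r) + B * (Tψ - rb) ≤ 0 := hexp ▸ hsum
  nlinarith [m1, m2, hfin, e1, e2]
end

section
/- Wakeup Estimator invariant: in Algorithm 2, with clients sorted so that (\hat r_1/r_1)w_1 ≥ (\hat r_2/r_2)w_2 ≥ …, letting S and \hat w be the returned set and total weight, every client i ∈ S satisfies (\hat r_i/r_i)·w_i > \hat w, i.e., \hat r_i · w_i/\hat w > r_i. -/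
/-- The Wakeup Estimator (Algorithm 2): greedily scan clients `0, …, j-1`
(sorted so `(rh i / r i) * w i` is nonincreasing), adding client `i` and its
weight whenever `(rh i / r i) * w i > ŵ + w i`. Returns the selected set `S`
and the total weight `ŵ`. -/
noncomputable def wakeupEstimator (j : ℕ) (w r rh : ℕ → ℝ) : Finset ℕ × ℝ :=
  (List.range j).foldl
    (fun acc i =>
      if (rh i / r i) * w i > acc.2 + w i then (insert i acc.1, acc.2 + w i)
      else acc)
    (∅, 0)

lemma wakeup_inv (j : ℕ) (w r rh : ℕ → ℝ)
    (hw : ∀ i, 0 < w i)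
    (hsorted : ∀ a b, a ≤ b → (rh b / r b) * w b ≤ (rh a / r a) * w a) :
    (∀ i ∈ (wakeupEstimator j w r rh).1,
      i < j ∧ (rh i / r i) * w i > (wakeupEstimator j w r rh).2 ∧
      0 < (wakeupEstimator j w r rh).2) ∧
    0 ≤ (wakeupEstimator j w r rh).2 := by
  induction j with
  | zero => simp [wakeupEstimator]
  | succ n ih =>
    have hstep : wakeupEstimator (n + 1) w r rh =
        (fun acc i =>
          if (rh i / r i) * w i > acc.2 + w i then (insert i acc.1, acc.2 + w i)
          else acc) (wakeupEstimator n w r rh) n := by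
      simp [wakeupEstimator, List.range_succ]
    obtain ⟨ih1, ih2⟩ := ih
    set A := wakeupEstimator n w r rh with hA
    by_cases hc : (rh n / r n) * w n > A.2 + w n
    · rw [hstep]
      simp only [hc, if_pos]
      constructor
      · intro i hi
        simp only [Finset.mem_insert] at hi
        rcases hi with rfl | hi
        · exact ⟨Nat.lt_succ_self _, hc, by nlinarith [hw i]⟩
        · obtain ⟨h1, h2, _⟩ := ih1 i hi
          refine ⟨h1.trans (Nat.lt_succ_self _), ?_, by nlinarith [hw n]⟩
          calc A.2 + w n < (rh n / r n) * w n := hc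
            _ ≤ (rh i / r i) * w i := hsorted i n h1.le
      · nlinarith [hw n]
    · rw [hstep]
      simp only [hc, if_neg, not_false_iff]
      refine ⟨fun i hi => ?_, ih2⟩
      obtain ⟨h1, h2, h3⟩ := ih1 i hi
      exact ⟨h1.trans (Nat.lt_succ_self _), h2, h3⟩

/-- Wakeup Estimator invariant: every selected client `i ∈ S`
satisfies `(rh i / r i) * w i > ŵ` for the final total weight `ŵ`, i.e.,
`rh i * w i / ŵ > r i`. -/
theorem stmt8 (j : ℕ) (w r rh : ℕ → ℝ)
    (hw : ∀ i, 0 < w i) (hr : ∀ i, 0 < r i) (hrh : ∀ i, 0 < rh i)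
    (hsorted : ∀ a b, a ≤ b → (rh b / r b) * w b ≤ (rh a / r a) * w a) :
    ∀ i ∈ (wakeupEstimator j w r rh).1,
      (rh i / r i) * w i > (wakeupEstimator j w r rh).2 ∧
        rh i * w i / (wakeupEstimator j w r rh).2 > r i := by
  intro i hi
  obtain ⟨_, h2, h3⟩ := (wakeup_inv j w r rh hw hsorted).1 i hi
  refine ⟨h2, ?_⟩
  rw [gt_iff_lt, lt_div_iff₀ h3]
  have : (rh i / r i) * w i = rh i * w i / r i := by ring
  rw [gt_iff_lt, this, lt_div_iff₀ (hr i)] at h2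
  nlinarith
end

section
/- Wakeup Estimator exclusion property: in Algorithm 2 (clients sorted so that (\hat r_i/r_i)w_i is nonincreasing), every client i' not included in the returned set S satisfies (\hat r_{i'}/r_{i'})·w_{i'} ≤ \hat w + w_{i'} evaluated at the time of its iteration, and consequently \hat r_{i'} · w_{i'}/(\hat w_{final} + w_{i'}) ≤ r_{i'} where \hat w_{final} ≥ \hat w at that time, i.e., client i' is estimated not to benefit from switching to base station m_1. -/
private lemma we_mono (w r rh : ℕ → ℝ) (hw : ∀ i, 0 < w i) :
    ∀ (l : List ℕ) (acc : Finset ℕ × ℝ),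
      acc.2 ≤ ((l.foldl
        (fun acc i =>
          if (rh i / r i) * w i > acc.2 + w i then (insert i acc.1, acc.2 + w i)
          else acc) acc).2) ∧
      acc.1 ⊆ ((l.foldl
        (fun acc i =>
          if (rh i / r i) * w i > acc.2 + w i then (insert i acc.1, acc.2 + w i)
          else acc) acc).1) := by
  intro l
  induction l with
  | nil => intro acc; simp
  | cons a l ih =>
    intro acc
    simp only [List.foldl_cons]
    by_cases h : (rh a / r a) * w a > acc.2 + w a
    · simp only [if_pos h]
      obtain ⟨h1, h2⟩ := ih (insert a acc.1, acc.2 + w a)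
      constructor
      · calc acc.2 ≤ acc.2 + w a := by linarith [hw a]
          _ ≤ _ := h1
      · exact (Finset.subset_insert a acc.1).trans h2
    · simp only [if_neg h]; exact ih acc

private lemma we_excl (w r rh : ℕ → ℝ) (hw : ∀ i, 0 < w i) :
    ∀ (l : List ℕ) (acc : Finset ℕ × ℝ) (i : ℕ), i ∈ l →
      i ∉ ((l.foldl
        (fun acc i =>
          if (rh i / r i) * w i > acc.2 + w i then (insert i acc.1, acc.2 + w i)
          else acc) acc).1) →
      (rh i / r i) * w i ≤ ((l.foldl
        (fun acc i =>
          if (rh i / r i) * w i > acc.2 + w i then (insert i acc.1, acc.2 + w i)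
          else acc) acc).2) + w i := by
  intro l
  induction l with
  | nil => intro acc i hi; simp at hi
  | cons a l ih =>
    intro acc i hi hnot
    simp only [List.foldl_cons] at hnot ⊢
    rcases List.mem_cons.mp hi with rfl | hi
    · by_cases h : (rh i / r i) * w i > acc.2 + w i
      · exfalso
        apply hnot
        rw [if_pos h]
        exact (we_mono w r rh hw l _).2 (Finset.mem_insert_self i acc.1)
      · rw [if_neg h] at hnot ⊢
        push_neg at h
        have := (we_mono w r rh hw l acc).1
        linarith
    · exact ih _ i hi hnot

private lemma we_nonneg (w r rh : ℕ → ℝ) (hw : ∀ i, 0 < w i) (j : ℕ) :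
    0 ≤ (wakeupEstimator j w r rh).2 := by
  have := (we_mono w r rh hw (List.range j) (∅, 0)).1
  simpa [wakeupEstimator] using this

/-- Wakeup Estimator exclusion property: every scanned client
`i' < j` not included in the returned set `S` satisfies
`(rh i' / r i') * w i' ≤ ŵ_final + w i'` (since `ŵ` is nondecreasing over the
iterations and the test failed at `i'`'s iteration), and consequently
`rh i' * w i' / (ŵ_final + w i') ≤ r i'`: client `i'` is estimated not to
benefit from switching to base station `m₁`. -/
theorem stmt9 (j : ℕ) (w r rh : ℕ → ℝ)
    (hw : ∀ i, 0 < w i) (hr : ∀ i, 0 < r i) (hrh : ∀ i, 0 < rh i)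
    (hsorted : ∀ a b, a ≤ b → (rh b / r b) * w b ≤ (rh a / r a) * w a) :
    ∀ i' < j, i' ∉ (wakeupEstimator j w r rh).1 →
      (rh i' / r i') * w i' ≤ (wakeupEstimator j w r rh).2 + w i' ∧
        rh i' * w i' / ((wakeupEstimator j w r rh).2 + w i') ≤ r i' := by
  intro i' hij hnot
  have h1 : (rh i' / r i') * w i' ≤ (wakeupEstimator j w r rh).2 + w i' := by
    have := we_excl w r rh hw (List.range j) (∅, 0) i' (List.mem_range.mpr hij)
    simpa [wakeupEstimator] using this (by simpa [wakeupEstimator] using hnot)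
  refine ⟨h1, ?_⟩
  have hpos : 0 < (wakeupEstimator j w r rh).2 + w i' := by
    have := we_nonneg w r rh hw j
    have := hw i'
    linarith
  rw [div_le_iff₀ hpos]
  have hr' := hr i'
  have : rh i' * w i' / r i' ≤ (wakeupEstimator j w r rh).2 + w i' := by
    rw [div_mul_eq_mul_div] at h1; linarith [h1]
  calc rh i' * w i' = (rh i' * w i' / r i') * r i' := by field_simp
    _ ≤ ((wakeupEstimator j w r rh).2 + w i') * r i' := by
        exact mul_le_mul_of_nonneg_right this hr'.le
    _ = r i' * ((wakeupEstimator j w r rh).2 + w i') := mul_comm _ _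
end

section
/- If client i's true per-block rates satisfy a proportionality H_{i,z} = c·\bar H_z for a constant c > 0 across all blocks z, then in the optimal weighted proportional fair schedule between client i (weight w_i) and the aggregate client (weight W, rates \bar H_z), client i's throughput equals (w_i/(w_i+W))·c·∑_z \bar H_z; in particular it is obtained by the uniform split φ_{i,z} = w_i/(w_i+W). -/
/-- If client `i`'s per-block rates are proportional to the
aggregate client's rates, `H i z = c * Hb z` with `c > 0`, then the uniform
split `φ z = w / (w + W)` maximizes the two-player weighted proportional
fairness objective, and under it client `i`'s throughput equals
`(w / (w + W)) * c * ∑ z, Hb z`. -/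
theorem stmt10 {Z : Type*} [Fintype Z]
    (Hb : Z → ℝ) (c w W : ℝ)
    (hHb : ∀ z, 0 < Hb z) (hc : 0 < c) (hw : 0 < w) (hW : 0 < W)
    (H : Z → ℝ) (hH : ∀ z, H z = c * Hb z) :
    let φ : Z → ℝ := fun _ => w / (w + W)
    (∑ z, φ z * H z = (w / (w + W)) * (c * ∑ z, Hb z)) ∧
      (∀ ψ : Z → ℝ, (∀ z, 0 ≤ ψ z ∧ ψ z ≤ 1) →
        0 < ∑ z, ψ z * H z → 0 < ∑ z, (1 - ψ z) * Hb z →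
        w * Real.log (∑ z, ψ z * H z) + W * Real.log (∑ z, (1 - ψ z) * Hb z) ≤
          w * Real.log (∑ z, φ z * H z) +
            W * Real.log (∑ z, (1 - φ z) * Hb z)) := by
  intro φ
  have hwW : 0 < w + W := by linarith
  have hfirst : ∑ z, φ z * H z = (w / (w + W)) * (c * ∑ z, Hb z) := by
    simp only [φ, hH, Finset.mul_sum]
  refine ⟨hfirst, ?_⟩
  intro ψ hψ hx' hy'
  set S := ∑ z, Hb z with hSdef
  have hsumH : ∑ z, ψ z * H z = c * ∑ z, ψ z * Hb z := by
    simp only [hH, Finset.mul_sum]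
    exact Finset.sum_congr rfl fun z _ => by ring
  set x := ∑ z, ψ z * Hb z with hxdef
  have hx : 0 < x := by
    rw [hsumH] at hx'
    rcases mul_pos_iff.mp hx' with h | h
    · exact h.2
    · exact absurd h.1 (not_lt.mpr hc.le)
  have hy : ∑ z, (1 - ψ z) * Hb z = S - x := by
    rw [hSdef, hxdef, ← Finset.sum_sub_distrib]
    exact Finset.sum_congr rfl fun z _ => by ring
  rw [hy] at hy' ⊢
  have hS : 0 < S := by linarith
  have hphi2 : ∑ z, (1 - φ z) * Hb z = (W / (w + W)) * S := by
    rw [hSdef, Finset.mul_sum]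
    refine Finset.sum_congr rfl fun z _ => ?_
    have : (1 : ℝ) - w / (w + W) = W / (w + W) := by field_simp; ring
    simp only [φ]; rw [this]
  rw [hsumH, hfirst, hphi2]
  set A := w / (w + W) * S with hAdef
  set B := W / (w + W) * S with hBdef
  have hA : 0 < A := by positivity
  have hB : 0 < B := by positivity
  have hrw : w / (w + W) * (c * S) = c * A := by rw [hAdef]; ring
  rw [hrw]
  have e1 : Real.log (c * x) = Real.log (c * A) + Real.log (x / A) := by
    rw [Real.log_div hx.ne' hA.ne', Real.log_mul hc.ne' hx.ne',
      Real.log_mul hc.ne' hA.ne']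
    ring
  have e2 : Real.log (S - x) = Real.log B + Real.log ((S - x) / B) := by
    rw [Real.log_div hy'.ne' hB.ne']
    ring
  have hl1 : Real.log (x / A) ≤ x / A - 1 :=
    Real.log_le_sub_one_of_pos (by positivity)
  have hl2 : Real.log ((S - x) / B) ≤ (S - x) / B - 1 :=
    Real.log_le_sub_one_of_pos (by positivity)
  have heq : w * (x / A - 1) + W * ((S - x) / B - 1) = 0 := by
    rw [hAdef, hBdef]
    field_simp
    ring
  have hm1 : w * Real.log (x / A) ≤ w * (x / A - 1) :=
    mul_le_mul_of_nonneg_left hl1 hw.le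
  have hm2 : W * Real.log ((S - x) / B) ≤ W * ((S - x) / B - 1) :=
    mul_le_mul_of_nonneg_left hl2 hW.le
  rw [e1, e2]
  nlinarith [hm1, hm2, heq]
end
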